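/- For the class of additive valuations over goods, ρ_{2,2} = 5/6: for every additive valuation v over m ≥ 2 items, NS_{2,2}(v) ≥ (5/6)·MMS_2(v), and for the valuation with item values 4,3,2,2,1, NS_{2,2}(v) = 5 while MMS_2(v) = 6. -/

import Mathlib

/-- The maximin share for 2 agents of the additive valuation on `Fin m` with item
values `w` (items indexed in non-increasing value order). -/
noncomputable def MMS2 {m : ℕ} (w : Fin m → ℝ) : ℝ :=
  sSup {x : ℝ | ∃ B : Finset (Fin m), x ≤ ∑ i ∈ B, w i ∧ x ≤ ∑ i ∈ Bᶜ, w i}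

/-- The nested share `NS_{2,2}`: the best value over partitions in which bundle `B₂`
is a consecutive block `e_{a+1}, …, e_b` of items and `B₁` is its complement (a prefix
together with a suffix). -/
noncomputable def NS22 {m : ℕ} (w : Fin m → ℝ) : ℝ :=
  sSup {x : ℝ | ∃ a b : ℕ, a ≤ b ∧ b ≤ m ∧
    x ≤ ∑ i ∈ Finset.univ.filter (fun i : Fin m => a ≤ i.val ∧ i.val < b), w i ∧
    x ≤ ∑ i ∈ Finset.univ.filter (fun i : Fin m => i.val < a ∨ b ≤ i.val), w i}

/-!
Let `f 0 ≥ f 1 ≥ ⋯` be the item values, fix a maximin partition, of value `μ`, of items of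
total value `T ≥ 2μ`, and let `c = 5μ/6`.
Suppose that no block of consecutive items and its complement are both worth at least `c`;
then every block worth at least `c` is worth more than `T - c`. One of the two bundles holds a
majority of the first `2r + 1` items, hence is worth at least the block `f r + ⋯ + f (2r)`, so that
block is worth at most `T - μ < T - c`, hence less than `c` (for `r = 0, 1, 2`). A block grown item by
item therefore reaches `c` only by overshooting `T - c`, through an item worth more than
`T - 2c ≥ μ/3`; as three such items are worth more than `c`, this happens within three items.
If `f 0 + f 1 < c`, the block started at position `2` must run past `f 2 + f 3 + f 4 < c`, which
is too far. Otherwise `f 0 + f 1 > T - c`, the block started at position `1` ends with `f 3`, and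
counting how the first four items are split between the bundles leaves one worth less than `μ`.
-/

open Finset

section

variable {f : ℕ → ℝ}

theorem sum_Ico_sub_le_sum_of_le_card (hf : Antitone f) (hf0 : ∀ i, 0 ≤ f i) {Z : Finset ℕ}
    {n s : ℕ} (hs : s ≤ #(Z ∩ range n)) : ∑ i ∈ Ico (n - s) n, f i ≤ ∑ i ∈ Z, f i := by
  set W := Z ∩ range n
  set I := Ico (n - s) n
  have hcard : #(I \ W) ≤ #(W \ I) := by
    have hI : #I ≤ s := by simp only [I, Nat.card_Ico]; omega
    have := card_sdiff_add_card_inter I W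
    have := card_sdiff_add_card_inter W I
    rw [inter_comm] at this
    omega
  -- exchange the items of `I \ W` for the at least as many, and more valuable, items of `W \ I`
  calc ∑ i ∈ I, f i = ∑ i ∈ I ∩ W, f i + ∑ i ∈ I \ W, f i :=
        (sum_inter_add_sum_sdiff _ _ _).symm
    _ ≤ ∑ i ∈ W ∩ I, f i + #(I \ W) • f (n - s) := by
        rw [inter_comm]
        gcongr
        exact sum_le_card_nsmul _ _ _ fun i hi => hf (mem_Ico.mp (mem_sdiff.mp hi).1).1
    _ ≤ ∑ i ∈ W ∩ I, f i + #(W \ I) • f (n - s) := by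
        gcongr
        exact hf0 _
    _ ≤ ∑ i ∈ W ∩ I, f i + ∑ i ∈ W \ I, f i := by
        gcongr
        refine card_nsmul_le_sum _ _ _ fun i hi => hf ?_
        simp only [W, I, mem_sdiff, mem_inter, mem_range, mem_Ico] at hi
        omega
    _ = ∑ i ∈ W, f i := sum_inter_add_sum_sdiff _ _ _
    _ ≤ ∑ i ∈ Z, f i := sum_le_sum_of_subset_of_nonneg inter_subset_left fun i _ _ => hf0 i

theorem le_card_inter_range_add_card_inter_range {X Y : Finset ℕ} {n : ℕ}
    (h : range n ⊆ X ∪ Y) : n ≤ #(X ∩ range n) + #(Y ∩ range n) := by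
  calc n = #((X ∪ Y) ∩ range n) := by rw [inter_eq_right.mpr h, card_range]
    _ ≤ #(X ∩ range n) + #(Y ∩ range n) := by
        rw [union_inter_distrib_right]
        exact card_union_le _ _

theorem min_sum_add_sum_Ico_le (hf : Antitone f) (hf0 : ∀ i, 0 ≤ f i) {X Y : Finset ℕ}
    {r : ℕ} (h : range (2 * r + 1) ⊆ X ∪ Y) :
    min (∑ i ∈ X, f i) (∑ i ∈ Y, f i) + ∑ i ∈ Ico r (2 * r + 1), f i ≤
      ∑ i ∈ X, f i + ∑ i ∈ Y, f i := by
  wlog hX : r + 1 ≤ #(X ∩ range (2 * r + 1)) generalizing X Y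
  · have hY : r + 1 ≤ #(Y ∩ range (2 * r + 1)) := by
      have := le_card_inter_range_add_card_inter_range h
      omega
    have := this (union_comm X Y ▸ h) hY
    rwa [min_comm, add_comm (∑ i ∈ X, f i)]
  have := sum_Ico_sub_le_sum_of_le_card hf hf0 hX
  rw [show 2 * r + 1 - (r + 1) = r by omega] at this
  linarith [min_le_right (∑ i ∈ X, f i) (∑ i ∈ Y, f i)]

theorem min_sum_add_le_of_range_four_subset (hf : Antitone f) (hf0 : ∀ i, 0 ≤ f i)
    {X Y : Finset ℕ} (h : range 4 ⊆ X ∪ Y) :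
    min (∑ i ∈ X, f i) (∑ i ∈ Y, f i) + (f 3 + min (f 0) (f 1 + f 2)) ≤
      ∑ i ∈ X, f i + ∑ i ∈ Y, f i := by
  wlog h0 : 0 ∈ X generalizing X Y
  · have h0Y : 0 ∈ Y := by
      have := h (by simp : 0 ∈ range 4)
      simp_all
    have := this (union_comm X Y ▸ h) h0Y
    rwa [min_comm, add_comm (∑ i ∈ X, f i)]
  have hcard := le_card_inter_range_add_card_inter_range h
  rcases le_or_gt 2 #(X ∩ range 4) with hX | hX
  · have h3 : f 3 ≤ ∑ i ∈ X.erase 0, f i := by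
      have hs : 1 ≤ #(X.erase 0 ∩ range 4) := by
        rw [erase_inter, card_erase_of_mem (by simp [h0])]
        omega
      simpa using sum_Ico_sub_le_sum_of_le_card hf hf0 hs
    have := add_sum_erase X f h0
    linarith [min_le_left (f 0) (f 1 + f 2), min_le_right (∑ i ∈ X, f i) (∑ i ∈ Y, f i)]
  · have h123 := sum_Ico_sub_le_sum_of_le_card (s := 3) hf hf0 (by omega : 3 ≤ #(Y ∩ range 4))
    simp only [sum_Ico_eq_sum_range, sum_range_succ, sum_range_zero, zero_add, Nat.reduceAdd,
      Nat.reduceSub] at h123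
    linarith [min_le_right (f 0) (f 1 + f 2), min_le_left (∑ i ∈ X, f i) (∑ i ∈ Y, f i)]

theorem exists_sum_Ico_lt_le {a n : ℕ} {c : ℝ} (hc : 0 < c) (hn : c ≤ ∑ i ∈ Ico a n, f i) :
    ∃ j, a ≤ j ∧ ∑ i ∈ Ico a j, f i < c ∧ c ≤ ∑ i ∈ Ico a (j + 1), f i := by
  classical
  have hex : ∃ b, c ≤ ∑ i ∈ Ico a b, f i := ⟨n, hn⟩
  obtain ⟨j, hj⟩ : ∃ j, Nat.find hex = j + 1 := by
    refine Nat.exists_eq_add_one.mpr (Nat.pos_of_ne_zero fun h0 => ?_)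
    have := Nat.find_spec hex
    rw [h0, Ico_eq_empty_of_le (Nat.zero_le a), sum_empty] at this
    linarith
  have hspec := Nat.find_spec hex
  rw [hj] at hspec
  have haj : a ≤ j := by
    by_contra! h
    rw [Ico_eq_empty_of_le (by omega), sum_empty] at hspec
    linarith
  exact ⟨j, haj, not_le.mp (Nat.find_min hex (by omega)), hspec⟩

theorem exists_sum_Ico_lt_lt_of_overshoot (hf : Antitone f) (hf0 : ∀ i, 0 ≤ f i) {a n : ℕ}
    {c T : ℝ} (hc : 0 < c) (hcT : 7 * c ≤ 3 * T)
    (hover : ∀ b, a ≤ b → c ≤ ∑ i ∈ Ico a b, f i → T - c < ∑ i ∈ Ico a b, f i)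
    (hreach : c ≤ ∑ i ∈ Ico a n, f i) :
    ∃ j, a ≤ j ∧ j < a + 3 ∧ ∑ i ∈ Ico a j, f i < c ∧ T - c < ∑ i ∈ Ico a (j + 1), f i := by
  obtain ⟨j, haj, hj, hj1⟩ := exists_sum_Ico_lt_le hc hreach
  have hj1' := hover (j + 1) (by omega) hj1
  refine ⟨j, haj, ?_, hj, hj1'⟩
  by_contra! hj3
  have hfj : T - 2 * c < f j := by linarith [sum_Ico_succ_top haj f]
  have h3 : 3 • f j ≤ ∑ i ∈ Ico a (a + 3), f i := by
    simpa using card_nsmul_le_sum (Ico a (a + 3)) f (f j) fun i hi => hf (by simp at hi; omega)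
  have : ∑ i ∈ Ico a (a + 3), f i ≤ ∑ i ∈ Ico a j, f i :=
    sum_le_sum_of_subset_of_nonneg (Ico_subset_Ico_right hj3) fun i _ _ => hf0 i
  simp only [nsmul_eq_mul, Nat.cast_ofNat] at h3
  linarith

theorem exists_Ico_five_sixths_mul_le (hf : Antitone f) (hf0 : ∀ i, 0 ≤ f i) {N : ℕ}
    (hN : 5 ≤ N) {X : Finset ℕ} (hX : X ⊆ range N) {μ : ℝ} (hμX : μ ≤ ∑ i ∈ X, f i)
    (hμY : μ ≤ ∑ i ∈ range N \ X, f i) :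
    ∃ a b, a ≤ b ∧ 5 / 6 * μ ≤ ∑ i ∈ Ico a b, f i ∧
      5 / 6 * μ ≤ ∑ i ∈ range N, f i - ∑ i ∈ Ico a b, f i := by
  set T := ∑ i ∈ range N, f i
  set c := 5 / 6 * μ with hc
  have hsplit : ∑ i ∈ X, f i + ∑ i ∈ range N \ X, f i = T := by
    rw [add_comm]; exact sum_sdiff hX
  have hcover (n : ℕ) (hn : n ≤ N) : range n ⊆ X ∪ (range N \ X) := by
    rw [union_sdiff_of_subset hX]; exact range_subset_range.mpr hn
  have hmin : μ ≤ min (∑ i ∈ X, f i) (∑ i ∈ range N \ X, f i) := le_min hμX hμY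
  by_contra! H
  have hT : 2 * μ ≤ T := by linarith
  have hμ : 0 < μ := by
    by_contra! h
    have := H 0 0 le_rfl (by simp only [Ico_self, sum_empty]; linarith)
    simp only [Ico_self, sum_empty, sub_zero] at this
    linarith [sum_nonneg fun i (_ : i ∈ range N) => hf0 i]
  have hshort (r : ℕ) (hr : 2 * r + 1 ≤ N) : ∑ i ∈ Ico r (2 * r + 1), f i < c := by
    by_contra! h
    linarith [H _ _ (by omega) h, min_sum_add_sum_Ico_le hf hf0 (hcover _ hr)]
  have hcross (a : ℕ) (ha : a ≤ N) (hreach : c ≤ T - ∑ i ∈ range a, f i) :=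
    exists_sum_Ico_lt_lt_of_overshoot (T := T) hf hf0 (by positivity) (by linarith)
      (fun b hab hb => by linarith [H a b hab hb])
      (by linarith [sum_range_add_sum_Ico f ha] : c ≤ ∑ i ∈ Ico a N, f i)
  have h0 := hshort 0 (by omega)
  have h12 := hshort 1 (by omega)
  simp only [sum_Ico_eq_sum_range, sum_range_succ, sum_range_zero, zero_add,
    Nat.reduceAdd] at h0 h12
  rcases lt_or_ge (f 0 + f 1) c with h01 | h01
  · obtain ⟨j, h2j, hj5, -, hj1⟩ :=
      hcross 2 (by omega) (by simp only [sum_range_succ, sum_range_zero, zero_add]; linarith)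
    have : ∑ i ∈ Ico 2 (j + 1), f i ≤ ∑ i ∈ Ico 2 5, f i :=
      sum_le_sum_of_subset_of_nonneg (Ico_subset_Ico_right (by omega)) fun i _ _ => hf0 i
    linarith [hshort 2 hN]
  · have h01' := H 0 2 (by omega) (by simpa [sum_Ico_eq_sum_range, sum_range_succ] using h01)
    obtain ⟨j, h1j, hj4, hj, hj1⟩ :=
      hcross 1 (by omega) (by simp only [sum_range_succ, sum_range_zero, zero_add]; linarith)
    obtain rfl : j = 3 := by
      have : 3 ≤ j := by
        by_contra! hj3
        interval_cases j <;>
          simp only [sum_Ico_eq_sum_range, sum_range_succ, sum_range_zero, zero_add, Nat.reduceAdd,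
            Nat.reduceSub] at hj1 <;>
          linarith [hf0 2]
      omega
    have h4 := min_sum_add_le_of_range_four_subset hf hf0 (hcover 4 (by omega))
    simp only [sum_Ico_eq_sum_range, sum_range_succ, sum_range_zero, zero_add, Nat.reduceAdd,
      Nat.reduceSub] at h01' hj hj1
    rcases min_choice (f 0) (f 1 + f 2) with hm | hm <;> rw [hm] at h4 <;>
      linarith [hf (show 2 ≤ 3 by norm_num)]

end

def extendByZero {M : Type*} [Zero M] {m : ℕ} (f : Fin m → M) (i : ℕ) : M :=
  if h : i < m then f ⟨i, h⟩ else 0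

section extendByZero

variable {M : Type*} {m : ℕ}

@[simp]
theorem extendByZero_val [Zero M] (f : Fin m → M) (i : Fin m) : extendByZero f i = f i := by
  simp [extendByZero]

theorem extendByZero_of_le [Zero M] (f : Fin m → M) {i : ℕ} (hi : m ≤ i) :
    extendByZero f i = 0 := by
  simp [extendByZero, not_lt.mpr hi]

theorem extendByZero_nonneg [Preorder M] [Zero M] {f : Fin m → M} (hf0 : ∀ i, 0 ≤ f i) (i : ℕ) :
    0 ≤ extendByZero f i := by
  unfold extendByZero
  split_ifs
  exacts [hf0 _, le_rfl]

theorem antitone_extendByZero [Preorder M] [Zero M] {f : Fin m → M} (hf : Antitone f)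
    (hf0 : ∀ i, 0 ≤ f i) : Antitone (extendByZero f) := by
  intro i j hij
  by_cases hj : j < m
  · simp only [extendByZero, hj, lt_of_le_of_lt hij hj, dite_true]
    exact hf (Fin.mk_le_mk.mpr hij)
  · rw [extendByZero_of_le f (not_lt.mp hj)]
    exact extendByZero_nonneg hf0 i

theorem sum_filter_val_mem_eq_sum_extendByZero [AddCommMonoid M] (f : Fin m → M)
    (s : Finset ℕ) :
    ∑ i ∈ univ.filter (fun i : Fin m => (i : ℕ) ∈ s), f i = ∑ i ∈ s, extendByZero f i := by
  have hs : (range m).filter (· ∈ s) = s.filter (· < m) := by ext; simp [and_comm]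
  simp_rw [sum_filter, ← extendByZero_val f]
  rw [Fin.sum_univ_eq_sum_range (fun j => if j ∈ s then extendByZero f j else 0),
    ← sum_filter, hs, sum_filter_of_ne]
  intro i _ hi
  by_contra! hm
  exact hi (extendByZero_of_le f hm)

end extendByZero

section shares

variable {m : ℕ}

theorem exists_MMS2_le_sum (w : Fin m → ℝ) :
    ∃ A : Finset (Fin m), MMS2 w ≤ ∑ i ∈ A, w i ∧ MMS2 w ≤ ∑ i ∈ Aᶜ, w i := by
  obtain ⟨A, -, hA⟩ := exists_max_image univ
    (fun B : Finset (Fin m) => min (∑ i ∈ B, w i) (∑ i ∈ Bᶜ, w i)) univ_nonempty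
  have : MMS2 w ≤ min (∑ i ∈ A, w i) (∑ i ∈ Aᶜ, w i) :=
    csSup_le ⟨_, A, min_le_left _ _, min_le_right _ _⟩
      fun x ⟨B, h₁, h₂⟩ => (le_min h₁ h₂).trans (hA B (mem_univ B))
  exact ⟨A, this.trans (min_le_left _ _), this.trans (min_le_right _ _)⟩

theorem MMS2_le_half_sum (w : Fin m → ℝ) : MMS2 w ≤ (∑ i, w i) / 2 := by
  obtain ⟨A, h₁, h₂⟩ := exists_MMS2_le_sum w
  linarith [sum_add_sum_compl A w]

variable {w : Fin m → ℝ}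

theorem le_MMS2 {x : ℝ} (B : Finset (Fin m)) (h₁ : x ≤ ∑ i ∈ B, w i)
    (h₂ : x ≤ ∑ i ∈ Bᶜ, w i) : x ≤ MMS2 w :=
  le_csSup ⟨(∑ i, w i) / 2, fun y ⟨C, hC, hCc⟩ => by linarith [sum_add_sum_compl C w]⟩
    ⟨B, h₁, h₂⟩

theorem NS22_le {x : ℝ} (h : ∀ a b, a ≤ b → b ≤ m →
      min (∑ i ∈ univ.filter (fun i : Fin m => a ≤ i.val ∧ i.val < b), w i)
        (∑ i ∈ univ.filter (fun i : Fin m => i.val < a ∨ b ≤ i.val), w i) ≤ x) :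
    NS22 w ≤ x :=
  csSup_le ⟨_, 0, 0, le_rfl, Nat.zero_le m, min_le_left _ _, min_le_right _ _⟩
    fun _ ⟨a, b, hab, hb, h₁, h₂⟩ => (le_min h₁ h₂).trans (h a b hab hb)

theorem le_NS22_of_Ico {x : ℝ} {a b : ℕ} (hab : a ≤ b)
    (h₁ : x ≤ ∑ i ∈ Ico a b, extendByZero w i)
    (h₂ : x ≤ ∑ i, w i - ∑ i ∈ Ico a b, extendByZero w i) : x ≤ NS22 w := by
  have hbdd : BddAbove {x : ℝ | ∃ a b : ℕ, a ≤ b ∧ b ≤ m ∧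
      x ≤ ∑ i ∈ univ.filter (fun i : Fin m => a ≤ i.val ∧ i.val < b), w i ∧
      x ≤ ∑ i ∈ univ.filter (fun i : Fin m => i.val < a ∨ b ≤ i.val), w i} := by
    refine ⟨∑ i, |w i|, fun y ⟨a, b, _, _, hy, _⟩ => hy.trans ?_⟩
    exact (sum_le_sum fun i _ => le_abs_self (w i)).trans
      (sum_le_sum_of_subset_of_nonneg (filter_subset _ _) fun i _ _ => abs_nonneg (w i))
  rw [← sum_filter_val_mem_eq_sum_extendByZero] at h₁ h₂
  rw [← sum_filter_not_add_sum_filter _ (fun i : Fin m => (i : ℕ) ∈ Ico a b),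
    add_sub_cancel_right] at h₂
  -- a block reaching past the last item is clipped to it
  refine le_csSup hbdd ⟨min a m, min b m, min_le_min_right m hab, min_le_right b m, ?_, ?_⟩
  · convert h₁ using 2
    ext i
    simp only [mem_filter, mem_univ, true_and, mem_Ico]
    omega
  · convert h₂ using 2
    ext i
    simp only [mem_filter, mem_univ, true_and, mem_Ico]
    omega

end shares

theorem five_sixths_mul_MMS2_le_NS22 {m : ℕ} {w : Fin m → ℝ} (hm : 2 ≤ m) (hw : ∀ i, 0 ≤ w i)
    (hs : Antitone w) : 5 / 6 * MMS2 w ≤ NS22 w := by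
  obtain ⟨A, hA, hAc⟩ := exists_MMS2_le_sum w
  set X := A.map Fin.valEmbedding
  -- three worthless items are appended so that there are at least five
  have hX : X ⊆ range (m + 3) := fun i hi => by
    obtain ⟨j, -, rfl⟩ := mem_map.mp hi
    simp only [Fin.valEmbedding_apply, mem_range]
    omega
  have hsum_X : ∑ i ∈ X, extendByZero w i = ∑ i ∈ A, w i := by simp [X]
  have hsum : ∑ i ∈ range (m + 3), extendByZero w i = ∑ i, w i := by
    rw [← sum_filter_val_mem_eq_sum_extendByZero,
      filter_true_of_mem fun i _ => mem_range.mpr (by omega)]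
  obtain ⟨a, b, hab, h₁, h₂⟩ := exists_Ico_five_sixths_mul_le (antitone_extendByZero hs hw)
    (extendByZero_nonneg hw) (by omega) hX (hsum_X ▸ hA)
    (by rw [← sum_sdiff hX, hsum_X] at hsum; linarith [sum_add_sum_compl A w])
  exact le_NS22_of_Ico hab h₁ (hsum ▸ h₂)

theorem NS22_four_three_two_two_one : NS22 (![4, 3, 2, 2, 1] : Fin 5 → ℝ) = 5 := by
  have hcast : (![4, 3, 2, 2, 1] : Fin 5 → ℝ) =
      fun i => ((![4, 3, 2, 2, 1] : Fin 5 → ℕ) i : ℝ) := by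
    ext i; fin_cases i <;> simp
  refine le_antisymm (NS22_le fun a b hab hb => ?_)
    (le_NS22_of_Ico (a := 0) (b := 2) (by norm_num) ?_ ?_)
  · -- no block of `4, 3, 2, 2, 1` is worth exactly half of the total `12`
    have key : ∀ b ≤ 5, ∀ a ≤ b,
        min (∑ i ∈ univ.filter (fun i : Fin 5 => a ≤ i.val ∧ i.val < b),
            (![4, 3, 2, 2, 1] : Fin 5 → ℕ) i)
          (∑ i ∈ univ.filter (fun i : Fin 5 => i.val < a ∨ b ≤ i.val),
            (![4, 3, 2, 2, 1] : Fin 5 → ℕ) i) ≤ 5 := by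
      decide
    rw [hcast]
    beta_reduce
    exact_mod_cast key b hb a hab
  · norm_num [sum_range_succ, extendByZero]
  · norm_num [sum_range_succ, extendByZero, Fin.sum_univ_succ]

theorem MMS2_four_three_two_two_one : MMS2 (![4, 3, 2, 2, 1] : Fin 5 → ℝ) = 6 := by
  have htotal : ∑ i, (![4, 3, 2, 2, 1] : Fin 5 → ℝ) i = 12 := by
    simp [Fin.sum_univ_five]; norm_num
  have hB : ∑ i ∈ {0, 2}, (![4, 3, 2, 2, 1] : Fin 5 → ℝ) i = 6 := by simp; norm_num
  refine le_antisymm (by linarith [MMS2_le_half_sum (![4, 3, 2, 2, 1] : Fin 5 → ℝ)])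
    (le_MMS2 {0, 2} hB.ge ?_)
  linarith [sum_add_sum_compl ({0, 2} : Finset (Fin 5)) (![4, 3, 2, 2, 1] : Fin 5 → ℝ)]

/-- `ρ_{2,2} = 5/6`: for every additive valuation over `m ≥ 2` goods (values sorted in
non-increasing order), `NS_{2,2} ≥ (5/6)·MMS_2`; and for item values `4,3,2,2,1`,
`NS_{2,2} = 5` while `MMS_2 = 6`. -/
theorem rho_two_two_eq_five_sixths :
    (∀ (m : ℕ) (w : Fin m → ℝ), 2 ≤ m → (∀ i, 0 ≤ w i) →
      (∀ i j : Fin m, i ≤ j → w j ≤ w i) →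
      (5 / 6 : ℝ) * MMS2 w ≤ NS22 w) ∧
    NS22 (![4, 3, 2, 2, 1] : Fin 5 → ℝ) = 5 ∧
    MMS2 (![4, 3, 2, 2, 1] : Fin 5 → ℝ) = 6 :=
  ⟨fun _ _ hm hw hs => five_sixths_mul_MMS2_le_NS22 hm hw hs,
    NS22_four_three_two_two_one, MMS2_four_three_two_two_one⟩
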